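/- arXiv:0810.0729 — 2 statements merged into one kernel-verified Lean document; each statement's English description precedes it below -/
import Mathlib

section
/- With M_1, M_2 the cut-and-join type operators M_1 = (1/2) Σ_{i+j≥1} q_i q_j (i+j-1) ∂/∂q_{i+j-1} + (1/2) Σ_{i,j≥1} q_{i+j+1} i j ∂²/(∂q_i ∂q_j) and M_2 = (1/2) Σ_{i+j≥2} q_i q_j (i+j-2) ∂/∂q_{i+j-2} + (1/2) Σ_{i,j≥1} q_{i+j+2} i j ∂²/(∂q_i ∂q_j), and Λ_1 = Σ_{i≥2} (i-1) q_i ∂/∂q_{i-1}, one has [M_1, Λ_1] = M_2. -/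
open MvPolynomial

/-- Λ₁ = Σ_{i≥2} (i-1) q_i ∂/∂q_{i-1}, reindexed by i = j+1. -/
noncomputable def Lam1 (f : MvPolynomial ℕ ℚ) : MvPolynomial ℕ ℚ :=
  ∑ᶠ j : ℕ, (j : ℚ) • (X (j + 1) * pderiv j f)

/-- M_a = ½ Σ_{i,j≥1, i+j-a≥1} (i+j-a) q_i q_j ∂/∂q_{i+j-a}
        + ½ Σ_{i,j≥1} i j q_{i+j+a} ∂²/∂q_i∂q_j. -/
noncomputable def M (a : ℕ) (f : MvPolynomial ℕ ℚ) : MvPolynomial ℕ ℚ :=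
  (1 / 2 : ℚ) •
    ((∑ᶠ i : ℕ, ∑ᶠ j : ℕ,
        if 1 ≤ i ∧ 1 ≤ j ∧ 1 ≤ i + j - a then
          ((i + j - a : ℕ) : ℚ) • (X i * X j * pderiv (i + j - a) f)
        else 0) +
      (∑ᶠ i : ℕ, ∑ᶠ j : ℕ,
        ((i : ℚ) * (j : ℚ)) • (X (i + j + a) * pderiv i (pderiv j f))))

/-!
Λ₁ is the derivation `q_j ↦ j q_{j+1}`, and `[∂_{m+1}, Λ₁] = m ∂_m`. So in `[M₁, Λ₁]` only two
kinds of terms survive: those where Λ₁ has been commuted past a derivative of M₁, which lowers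
its index by one, and those where it has hit the coefficient, which raises an index by one. After
shifting that index back, the coefficients combine to those of M₂:
`(i+j+1)(i+j) - i(i+j) - j(i+j) = i+j` in the cut part and
`(i+1)(j+1) ((i+2) + (j+2) - (i+j+3)) = (i+1)(j+1)` in the join part. All sums are finite, since
`∂_k f = 0` once `k` exceeds the variables of `f`.
-/

open Finset

section Finsum

variable {A : Type*} [AddCommMonoid A]

theorem finsum_eq_sum_range_succ {g : ℕ → A} {B : ℕ} (h₀ : g 0 = 0)
    (hB : ∀ k, B < k → g k = 0) : ∑ᶠ k, g k = ∑ k ∈ range B, g (k + 1) := by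
  rw [finsum_eq_sum_of_support_subset (s := range (B + 1)), sum_range_succ', h₀, add_zero]
  intro k hk
  simp only [coe_range, Set.mem_Iio]
  by_contra! h
  exact hk (hB k h)

theorem sum_range_succ_eq_sum_range {F : ℕ → A} {B : ℕ} (h₀ : F 0 = 0) (hB : F B = 0) :
    ∑ i ∈ range B, F (i + 1) = ∑ i ∈ range B, F i := by
  have := sum_range_succ' F B
  rwa [sum_range_succ, hB, h₀, add_zero, add_zero, eq_comm] at this

theorem finsum_finsum_eq_sum_range_succ {t : ℕ → ℕ → A} {B : ℕ}
    (h : ∀ i j, i = 0 ∨ j = 0 ∨ B < i ∨ B < j → t i j = 0) :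
    ∑ᶠ i, ∑ᶠ j, t i j = ∑ i ∈ range B, ∑ j ∈ range B, t (i + 1) (j + 1) := by
  have hrow (i : ℕ) (hi : i = 0 ∨ B < i) : ∑ᶠ j, t i j = 0 :=
    (finsum_congr fun j => h i j (by omega)).trans finsum_zero
  rw [finsum_eq_sum_range_succ (B := B) (hrow 0 (by omega)) fun i hi => hrow i (by omega)]
  exact sum_congr rfl fun i _ =>
    finsum_eq_sum_range_succ (h _ 0 (by omega)) fun j hj => h _ j (by omega)

end Finsum

theorem MvPolynomial.pderiv_pderiv_comm {σ R : Type*} [CommRing R] (i j : σ)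
    (f : MvPolynomial σ R) :
    pderiv i (pderiv j f) = pderiv j (pderiv i f) := by
  classical
  have : ⁅pderiv (R := R) i, pderiv (R := R) j⁆ = 0 := by
    refine derivation_ext fun k => ?_
    simp [Derivation.commutator_apply, pderiv_X, Pi.single_apply, apply_ite]
  simpa [Derivation.commutator_apply, sub_eq_zero] using congr($this f)

theorem MvPolynomial.derivation_apply_eq_sum_mul_pderiv {σ R : Type*} [CommSemiring R]
    (D : Derivation R (MvPolynomial σ R) (MvPolynomial σ R)) (f : MvPolynomial σ R) :
    D f = ∑ i ∈ f.vars, D (X i) * pderiv i f := by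
  classical
  let D' : Derivation R (MvPolynomial σ R) (MvPolynomial σ R) :=
    ∑ i ∈ f.vars, D (X i) • pderiv i
  have hD' (g : MvPolynomial σ R) : D' g = ∑ i ∈ f.vars, D (X i) * pderiv i g := by
    rw [← Derivation.coeFnAddMonoidHom_apply, map_sum, Finset.sum_apply]
    rfl
  rw [← hD']
  exact derivation_eq_of_forall_mem_vars fun k hk => by
    simp [hD', pderiv_X, Pi.single_apply, hk]

noncomputable def lam1Der : Derivation ℚ (MvPolynomial ℕ ℚ) (MvPolynomial ℕ ℚ) :=
  mkDerivation ℚ fun j => (j : ℚ) • X (j + 1)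

theorem lam1Der_X (j : ℕ) : lam1Der (X j) = (j : ℚ) • X (j + 1) :=
  mkDerivation_X ℚ _ j

theorem Lam1_eq_lam1Der : Lam1 = lam1Der := by
  funext f
  rw [Lam1, derivation_apply_eq_sum_mul_pderiv lam1Der,
    finsum_eq_sum_of_support_subset (s := f.vars) _ fun j hj => by_contra fun hj' => hj ?_]
  · simp only [lam1Der_X, smul_mul_assoc]
  · simp [pderiv_eq_zero_of_notMem_vars hj']

theorem lie_pderiv_succ_lam1Der (m : ℕ) :
    ⁅pderiv (R := ℚ) (m + 1), lam1Der⁆ = (m : ℚ) • pderiv m := by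
  refine derivation_ext fun k => ?_
  simp only [Derivation.commutator_apply, lam1Der_X, pderiv_X, Derivation.smul_apply,
    Derivation.map_smul, Pi.single_apply]
  split_ifs <;> simp_all

theorem pderiv_succ_lam1Der (m : ℕ) (f : MvPolynomial ℕ ℚ) :
    pderiv (m + 1) (lam1Der f) = lam1Der (pderiv (m + 1) f) + (m : ℚ) • pderiv m f := by
  rw [← Derivation.smul_apply, ← lie_pderiv_succ_lam1Der, Derivation.commutator_apply,
    add_sub_cancel]

theorem exists_forall_ge_pderiv_eq_zero {R : Type*} [CommSemiring R] (f : MvPolynomial ℕ R) :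
    ∃ N, ∀ k, N ≤ k → pderiv k f = 0 :=
  ⟨f.vars.sup id + 1, fun k hk => pderiv_eq_zero_of_notMem_vars fun hmem => by
    have := Finset.le_sup (f := id) hmem
    simp only [id] at this
    omega⟩

theorem pderiv_lam1Der_eq_zero_of_le {N : ℕ} {f : MvPolynomial ℕ ℚ}
    (hf : ∀ k, N ≤ k → pderiv k f = 0) : ∀ k, N + 1 ≤ k → pderiv k (lam1Der f) = 0 := by
  rintro (_ | m) hm
  · omega
  · rw [pderiv_succ_lam1Der, hf (m + 1) (by omega), hf m (by omega), map_zero, smul_zero,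
      add_zero]

/- The two halves of `M a` with `i, j` replaced by `i + 1, j + 1 ≤ B` and `c = 2 - a`, so that no
truncated subtraction occurs. -/
noncomputable def cutSum (c B : ℕ) (g : MvPolynomial ℕ ℚ) : MvPolynomial ℕ ℚ :=
  ∑ i ∈ range B, ∑ j ∈ range B,
    ((i + j + c : ℕ) : ℚ) • (X (i + 1) * X (j + 1) * pderiv (i + j + c) g)

noncomputable def joinSum (a B : ℕ) (g : MvPolynomial ℕ ℚ) : MvPolynomial ℕ ℚ :=
  ∑ i ∈ range B, ∑ j ∈ range B,
    (((i : ℚ) + 1) * ((j : ℚ) + 1)) • (X (i + j + 2 + a) * pderiv (i + 1) (pderiv (j + 1) g))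

theorem M_eq_smul_cutSum_add_joinSum {a c N B : ℕ} {g : MvPolynomial ℕ ℚ} (hac : a + c = 2)
    (hg : ∀ k, N ≤ k → pderiv k g = 0) (hB : N + a ≤ B) :
    M a g = (1 / 2 : ℚ) • (cutSum c B g + joinSum a B g) := by
  rw [M, finsum_finsum_eq_sum_range_succ, finsum_finsum_eq_sum_range_succ (B := B)]
  · congr 2
    · refine sum_congr rfl fun i _ => sum_congr rfl fun j _ => ?_
      rw [show i + 1 + (j + 1) - a = i + j + c by omega]
      split_ifs with h
      · rfl
      · rw [show i + j + c = 0 by omega]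
        simp
    · refine sum_congr rfl fun i _ => sum_congr rfl fun j _ => ?_
      rw [show i + 1 + (j + 1) + a = i + j + 2 + a by omega]
      push_cast
      rfl
  · rintro i j (rfl | rfl | hi | hj)
    · simp
    · simp
    · rw [pderiv_pderiv_comm, hg i (by omega)]
      simp
    · rw [hg j (by omega)]
      simp
  · rintro i j hij
    split_ifs with h
    · rw [hg _ (by omega)]
      simp
    · rfl

theorem cutSum_one_lam1Der_sub {B : ℕ} {f : MvPolynomial ℕ ℚ}
    (hf : ∀ k, B ≤ k → pderiv k f = 0) :
    cutSum 1 B (lam1Der f) - lam1Der (cutSum 1 B f) = cutSum 0 B f := by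
  set e : ℕ → ℕ → MvPolynomial ℕ ℚ := fun i j => X (i + 1) * X (j + 1) * pderiv (i + j) f
  -- `F (i + 1) j` and `G i (j + 1)` are what Λ₁ produces from the coefficients `q_{i+1}, q_{j+1}`.
  set F : ℕ → ℕ → MvPolynomial ℕ ℚ := fun i j => ((i * (i + j) : ℕ) : ℚ) • e i j
  set G : ℕ → ℕ → MvPolynomial ℕ ℚ := fun i j => ((j * (i + j) : ℕ) : ℚ) • e i j
  have hterm (i j : ℕ) :
      ((i + j + 1 : ℕ) : ℚ) • (X (i + 1) * X (j + 1) * pderiv (i + j + 1) (lam1Der f)) -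
        lam1Der (((i + j + 1 : ℕ) : ℚ) • (X (i + 1) * X (j + 1) * pderiv (i + j + 1) f)) =
      (((i + j + 1) * (i + j) : ℕ) : ℚ) • e i j - F (i + 1) j - G i (j + 1) := by
    simp only [e, F, G, Derivation.map_smul, pderiv_succ_lam1Der, Derivation.leibniz,
      lam1Der_X, smul_eq_mul, show i + 1 + j = i + j + 1 by omega,
      show i + (j + 1) = i + j + 1 by omega]
    simp only [smul_eq_C_mul]
    push_cast
    simp only [map_add, map_mul, map_natCast, map_one]
    ring
  have hF (j : ℕ) : ∑ i ∈ range B, F (i + 1) j = ∑ i ∈ range B, F i j := by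
    apply sum_range_succ_eq_sum_range (F := (F · j)) <;> simp [F, e, hf (B + j) (by omega)]
  have hG (i : ℕ) : ∑ j ∈ range B, G i (j + 1) = ∑ j ∈ range B, G i j := by
    apply sum_range_succ_eq_sum_range (F := G i) <;> simp [G, e, hf (i + B) (by omega)]
  calc cutSum 1 B (lam1Der f) - lam1Der (cutSum 1 B f)
      = ∑ i ∈ range B, ∑ j ∈ range B,
          ((((i + j + 1) * (i + j) : ℕ) : ℚ) • e i j - F (i + 1) j - G i (j + 1)) := by
        simp only [cutSum, map_sum, ← sum_sub_distrib, hterm]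
    _ = ∑ i ∈ range B, ∑ j ∈ range B,
          ((((i + j + 1) * (i + j) : ℕ) : ℚ) • e i j - F i j - G i j) := by
        simp only [sum_sub_distrib, hG]
        rw [sum_comm (f := fun i j => F (i + 1) j), sum_comm (f := fun i j => F i j)]
        simp only [hF]
    _ = cutSum 0 B f := by
        refine sum_congr rfl fun i _ => sum_congr rfl fun j _ => ?_
        simp only [F, G, ← sub_smul, add_zero]
        congr 1
        push_cast
        ring

theorem joinSum_one_lam1Der_sub {B : ℕ} {f : MvPolynomial ℕ ℚ}
    (hf : ∀ k, B ≤ k → pderiv k f = 0) :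
    joinSum 1 B (lam1Der f) - lam1Der (joinSum 1 B f) = joinSum 2 B f := by
  set e : ℕ → ℕ → MvPolynomial ℕ ℚ := fun i j => X (i + j + 2) * pderiv i (pderiv j f)
  -- `F` and `G` come from commuting Λ₁ past `∂_{i+1}` and `∂_{j+1}`.
  set F : ℕ → ℕ → MvPolynomial ℕ ℚ := fun i j => ((i : ℚ) * (i + 1) * (j + 1)) • e i (j + 1)
  set G : ℕ → ℕ → MvPolynomial ℕ ℚ := fun i j => (((i : ℚ) + 1) * j * (j + 1)) • e (i + 1) j
  have hterm (i j : ℕ) :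
      (((i : ℚ) + 1) * ((j : ℚ) + 1)) •
          (X (i + j + 2 + 1) * pderiv (i + 1) (pderiv (j + 1) (lam1Der f))) -
        lam1Der ((((i : ℚ) + 1) * ((j : ℚ) + 1)) •
          (X (i + j + 2 + 1) * pderiv (i + 1) (pderiv (j + 1) f))) =
      F i j + G i j - (((i : ℚ) + 1) * (j + 1) * (i + j + 3)) • e (i + 1) (j + 1) := by
    simp only [e, F, G, Derivation.map_smul, pderiv_succ_lam1Der, map_add, Derivation.leibniz,
      lam1Der_X, smul_eq_mul, show i + (j + 1) + 2 = i + j + 2 + 1 by omega,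
      show i + 1 + j + 2 = i + j + 2 + 1 by omega,
      show i + 1 + (j + 1) + 2 = i + j + 2 + 1 + 1 by omega]
    simp only [smul_eq_C_mul]
    push_cast
    simp only [map_add, map_mul, map_natCast, map_one, map_ofNat]
    ring
  have hF (j : ℕ) : ∑ i ∈ range B, F (i + 1) j = ∑ i ∈ range B, F i j := by
    apply sum_range_succ_eq_sum_range (F := (F · j)) <;>
      simp [F, e, pderiv_pderiv_comm B, hf B le_rfl]
  have hG (i : ℕ) : ∑ j ∈ range B, G i (j + 1) = ∑ j ∈ range B, G i j := by
    apply sum_range_succ_eq_sum_range (F := G i) <;> simp [G, e, hf B le_rfl]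
  calc joinSum 1 B (lam1Der f) - lam1Der (joinSum 1 B f)
      = ∑ i ∈ range B, ∑ j ∈ range B,
          (F i j + G i j - (((i : ℚ) + 1) * (j + 1) * (i + j + 3)) • e (i + 1) (j + 1)) := by
        simp only [joinSum, map_sum, ← sum_sub_distrib, hterm]
    _ = ∑ i ∈ range B, ∑ j ∈ range B,
          (F (i + 1) j + G i (j + 1) -
            (((i : ℚ) + 1) * (j + 1) * (i + j + 3)) • e (i + 1) (j + 1)) := by
        simp only [sum_sub_distrib, sum_add_distrib, hG]
        rw [sum_comm (f := fun i j => F (i + 1) j), sum_comm (f := fun i j => F i j)]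
        simp only [hF]
    _ = joinSum 2 B f := by
        refine sum_congr rfl fun i _ => sum_congr rfl fun j _ => ?_
        simp only [F, G, e, ← add_smul, ← sub_smul,
          show i + 1 + (j + 1) + 2 = i + j + 2 + 2 by omega]
        congr 1
        push_cast
        ring

/-- [M₁, Λ₁] = M₂ as operators on ℚ[q₁, q₂, …]. -/
theorem commutator_M1_Lam1 :
    ∀ f : MvPolynomial ℕ ℚ, M 1 (Lam1 f) - Lam1 (M 1 f) = M 2 f := by
  intro f
  obtain ⟨N, hf⟩ := exists_forall_ge_pderiv_eq_zero f
  have hfB : ∀ k, N + 2 ≤ k → pderiv k f = 0 := fun k hk => hf k (by omega)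
  rw [Lam1_eq_lam1Der,
    M_eq_smul_cutSum_add_joinSum (c := 1) rfl (pderiv_lam1Der_eq_zero_of_le hf) le_rfl,
    M_eq_smul_cutSum_add_joinSum (c := 1) (B := N + 2) rfl hf (by omega),
    M_eq_smul_cutSum_add_joinSum (c := 0) rfl hf le_rfl, Derivation.map_smul, map_add,
    ← cutSum_one_lam1Der_sub hfB, ← joinSum_one_lam1Der_sub hfB]
  module
end

section
/- Let D_1 = ∂/∂q_1 and M_2 = (1/2) Σ_{i+j≥3, i,j≥1} q_i q_j (i+j-2) ∂/∂q_{i+j-2} + (1/2) Σ_{i,j≥1} q_{i+j+2} i j ∂²/(∂q_i ∂q_j). Then the commutator [D_1, M_2] = D_1 ∘ M_2 - M_2 ∘ D_1 equals Λ_1 = Σ_{i≥2} (i-1) q_i ∂/∂q_{i-1}. -/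
open MvPolynomial

/-!
`∂/∂q₁` commutes with every `∂/∂q_k`, so its commutator with a term `c q_i q_j ∂_k` or
`c q_{i+j+a} ∂_i ∂_j` of `M a` is obtained by differentiating the coefficient polynomial only.
The second kind of term commutes with `∂/∂q₁`, since `i + j + a = 1` forces `i j = 0`. Of the
first kind, only the terms with `i = 1` or `j = 1` survive; by the symmetry `i ↔ j` they add up,
for `a = b + 1`, to twice `Σ_{j > b} (j - b) q_j ∂_{j-b} = Λ_b`, which cancels the factor `½`.
For a fixed polynomial all sums are truncated to finite ranges.
-/

namespace MvPolynomial

variable {σ R : Type*}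

theorem pderiv_pderiv_comm_s8 [CommSemiring R] (i j : σ) (f : MvPolynomial σ R) :
    pderiv i (pderiv j f) = pderiv j (pderiv i f) := by
  classical
  induction f using MvPolynomial.induction_on with
  | C a => simp
  | add p q hp hq => simp [hp, hq]
  | mul_X p n ih =>
    simp only [pderiv_mul, map_add, pderiv_X, Pi.single_apply]
    split_ifs <;> simp [ih, add_comm, add_left_comm]

theorem pderiv_smul_mul_sub [CommRing R] (i : σ) (c : R) (p g : MvPolynomial σ R) :
    pderiv i (c • (p * g)) - c • (p * pderiv i g) = c • (pderiv i p * g) := by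
  rw [Derivation.map_smul, pderiv_mul, smul_add, add_sub_cancel_right]

theorem pderiv_eq_zero_of_sup_vars_lt [CommSemiring R] {f : MvPolynomial ℕ R} {k : ℕ}
    (hk : f.vars.sup id < k) : pderiv k f = 0 :=
  pderiv_eq_zero_of_notMem_vars fun hmem => (Finset.le_sup (f := id) hmem).not_gt hk

end MvPolynomial

theorem finsum_eq_sum_range {M : Type*} [AddCommMonoid M] {g : ℕ → M} {R : ℕ}
    (hg : ∀ k, R ≤ k → g k = 0) : ∑ᶠ k, g k = ∑ k ∈ Finset.range R, g k :=
  finsum_eq_sum_of_support_subset g fun k hk => by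
    simpa using mt (hg k) hk

theorem finsum_finsum_eq_sum_range {M : Type*} [AddCommMonoid M] {g : ℕ → ℕ → M} {R : ℕ}
    (hg : ∀ i j, R ≤ i ∨ R ≤ j → g i j = 0) :
    ∑ᶠ i, ∑ᶠ j, g i j = ∑ i ∈ Finset.range R, ∑ j ∈ Finset.range R, g i j := by
  rw [finsum_eq_sum_range (R := R) fun i hi => ?_]
  · exact Finset.sum_congr rfl fun i _ => finsum_eq_sum_range fun j hj => hg i j (.inr hj)
  · exact finsum_eq_zero_of_forall_eq_zero fun j => hg i j (.inl hi)

theorem Finset.sum_sum_ite_eq_add_ite_eq {ι M : Type*} [AddCommMonoid M] [DecidableEq ι]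
    {s : Finset ι} {a : ι} (ha : a ∈ s) (g : ι → M) :
    ∑ i ∈ s, ∑ j ∈ s, ((if i = a then g j else 0) + (if j = a then g i else 0)) =
      2 • ∑ i ∈ s, g i := by
  simp only [Finset.sum_add_distrib, Finset.sum_ite_eq', ha, if_true]
  rw [Finset.sum_comm]
  simp [Finset.sum_ite_eq', ha, two_nsmul]

open Finset

/-- `Λ_b = Σ_{i > b} (i - b) q_i ∂/∂q_{i-b}`, indexed by `m = i - b`; `Lam1` is `Lam 1`. -/
noncomputable def Lam (b : ℕ) (f : MvPolynomial ℕ ℚ) : MvPolynomial ℕ ℚ :=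
  ∑ᶠ m : ℕ, (m : ℚ) • (X (m + b) * pderiv m f)

/-- The summands of the two double sums in `M a`: `q_i q_j ∂_{i+j-a}` cuts a part into two,
`q_{i+j+a} ∂_i ∂_j` joins two parts into one. -/
noncomputable def cutTerm (a : ℕ) (f : MvPolynomial ℕ ℚ) (i j : ℕ) : MvPolynomial ℕ ℚ :=
  if 1 ≤ i ∧ 1 ≤ j ∧ 1 ≤ i + j - a then
    ((i + j - a : ℕ) : ℚ) • (X i * X j * pderiv (i + j - a) f)
  else 0

noncomputable def joinTerm (a : ℕ) (f : MvPolynomial ℕ ℚ) (i j : ℕ) : MvPolynomial ℕ ℚ :=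
  ((i : ℚ) * (j : ℚ)) • (X (i + j + a) * pderiv i (pderiv j f))

section

variable {a N : ℕ} {f : MvPolynomial ℕ ℚ}

theorem M_eq_sum_range (hf : ∀ k, N ≤ k → pderiv k f = 0) {R : ℕ} (hR : N + a ≤ R) :
    M a f = (1 / 2 : ℚ) • ∑ i ∈ range R, ∑ j ∈ range R, (cutTerm a f i j + joinTerm a f i j) := by
  have hcut : ∀ i j, R ≤ i ∨ R ≤ j → cutTerm a f i j = 0 := by
    intro i j hij
    unfold cutTerm
    split_ifs
    · rw [hf _ (by omega), mul_zero, smul_zero]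
    · rfl
  have hjoin : ∀ i j, R ≤ i ∨ R ≤ j → joinTerm a f i j = 0 := by
    rintro i j (hi | hj)
    · rw [joinTerm, pderiv_pderiv_comm_s8, hf i (by omega), map_zero, mul_zero, smul_zero]
    · rw [joinTerm, hf j (by omega), map_zero, mul_zero, smul_zero]
  change (1 / 2 : ℚ) • ((∑ᶠ i, ∑ᶠ j, cutTerm a f i j) + ∑ᶠ i, ∑ᶠ j, joinTerm a f i j) = _
  rw [finsum_finsum_eq_sum_range hcut, finsum_finsum_eq_sum_range hjoin]
  simp only [sum_add_distrib]

theorem Lam_eq_sum_range (b : ℕ) (hf : ∀ k, N ≤ k → pderiv k f = 0) :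
    Lam b f = ∑ m ∈ range N, (m : ℚ) • (X (m + b) * pderiv m f) :=
  finsum_eq_sum_range fun m hm => by rw [hf m hm, mul_zero, smul_zero]

end

theorem pderiv_one_cutTerm_sub (b : ℕ) (f : MvPolynomial ℕ ℚ) (i j : ℕ) :
    pderiv 1 (cutTerm (b + 1) f i j) - cutTerm (b + 1) (pderiv 1 f) i j =
      (if i = 1 then ((j - b : ℕ) : ℚ) • (X j * pderiv (j - b) f) else 0) +
        (if j = 1 then ((i - b : ℕ) : ℚ) • (X i * pderiv (i - b) f) else 0) := by
  unfold cutTerm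
  by_cases h : 1 ≤ i ∧ 1 ≤ j ∧ 1 ≤ i + j - (b + 1)
  · rw [if_pos h, if_pos h, pderiv_pderiv_comm_s8, pderiv_smul_mul_sub, pderiv_mul]
    rcases eq_or_ne i 1 with rfl | hi <;> rcases eq_or_ne j 1 with rfl | hj
    · simp [add_mul, smul_add]
    · simp [hj, show 1 + j - (b + 1) = j - b by omega]
    · simp [hi]
    · simp [hi, hj]
  · rw [if_neg h, if_neg h, map_zero, sub_zero]
    have hi : i = 1 → j - b = 0 := by omega
    have hj : j = 1 → i - b = 0 := by omega
    split_ifs <;> simp_all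

theorem pderiv_one_joinTerm_sub (a : ℕ) (f : MvPolynomial ℕ ℚ) (i j : ℕ) :
    pderiv 1 (joinTerm a f i j) - joinTerm a (pderiv 1 f) i j = 0 := by
  rw [joinTerm, joinTerm, pderiv_pderiv_comm_s8 j 1, pderiv_pderiv_comm_s8 i 1, pderiv_smul_mul_sub]
  rcases eq_or_ne (i + j + a) 1 with h | h
  · obtain rfl | rfl : i = 0 ∨ j = 0 := by omega
    all_goals simp
  · rw [pderiv_X_of_ne h, zero_mul, smul_zero]

theorem commutator_pderiv_one_M_succ (b : ℕ) (f : MvPolynomial ℕ ℚ) :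
    pderiv 1 (M (b + 1) f) - M (b + 1) (pderiv 1 f) = Lam b f := by
  set N := f.vars.sup id + 1
  have hf : ∀ k, N ≤ k → pderiv k f = 0 := fun k hk =>
    pderiv_eq_zero_of_sup_vars_lt (by omega)
  have hf' : ∀ k, N ≤ k → pderiv k (pderiv 1 f) = 0 := fun k hk => by
    rw [pderiv_pderiv_comm_s8, hf k hk, map_zero]
  have hR : N + (b + 1) ≤ b + (N + 1) := by omega
  rw [M_eq_sum_range hf hR, M_eq_sum_range hf' hR, Lam_eq_sum_range b (N := N + 1)
    fun k hk => hf k (by omega)]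
  calc _ = (1 / 2 : ℚ) • ∑ i ∈ range (b + (N + 1)), ∑ j ∈ range (b + (N + 1)),
        ((pderiv 1 (cutTerm (b + 1) f i j) - cutTerm (b + 1) (pderiv 1 f) i j) +
          (pderiv 1 (joinTerm (b + 1) f i j) - joinTerm (b + 1) (pderiv 1 f) i j)) := by
        simp only [Derivation.map_smul, map_sum, map_add, ← smul_sub, ← sum_sub_distrib]
        congr! 3 with i _ j _
        abel
    _ = ∑ j ∈ range (b + (N + 1)), ((j - b : ℕ) : ℚ) • (X j * pderiv (j - b) f) := by
        simp only [pderiv_one_cutTerm_sub, pderiv_one_joinTerm_sub, add_zero]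
        rw [sum_sum_ite_eq_add_ite_eq (mem_range.2 (by omega)), two_nsmul, ← two_smul ℚ,
          smul_smul]
        norm_num
    _ = _ := by
        rw [sum_range_add, sum_eq_zero fun j hj => by
          rw [Nat.sub_eq_zero_of_le (mem_range.1 hj).le]; simp, zero_add]
        simp [add_comm b]

/-- [∂/∂q₁, M₂] = Λ₁ as operators on ℚ[q₁, q₂, …]. -/
theorem commutator_D1_M2 :
    ∀ f : MvPolynomial ℕ ℚ, pderiv 1 (M 2 f) - M 2 (pderiv 1 f) = Lam1 f :=
  commutator_pderiv_one_M_succ 1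
end
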